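/- For every z₀ ∈ [0,1] there exists n₀ ∈ ℕ such that for all integers n ≥ n₀, ℙ{ Z_{τ_n} ≤ 2^(−6n/5) } ≥ (1 − z₀) − 2^(−n/5). -/

import Mathlib

open MeasureTheory ProbabilityTheory

/-- `P` is the infinite product of fair Bernoulli(1/2) measures on `ℕ → Bool`:
the coordinate maps are i.i.d. fair coin flips under `P`. -/
def IsFairCoinMeasure (P : Measure (ℕ → Bool)) : Prop :=
  IsProbabilityMeasure P ∧
  iIndepFun (fun i (ω : ℕ → Bool) => ω i) P ∧
  ∀ (i : ℕ) (b : Bool), P {ω | ω i = b} = 1/2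

/-- The BEC polarization process with initial value `z₀`:
`Z_0 = z₀`, and `Z_{i+1} = Z_i²` if `ω i = true`, `Z_{i+1} = 2·Z_i − Z_i²` otherwise. -/
def Zproc (z₀ : ℝ) : ℕ → (ℕ → Bool) → ℝ
  | 0, _ => z₀
  | (i+1), ω => if ω i then (Zproc z₀ i ω)^2 else 2 * Zproc z₀ i ω - (Zproc z₀ i ω)^2

/-- The stopping time `τ_n := min( inf{ i : min(Z_i, 1−Z_i) ≤ 2^(−6n/5) }, n )`
(the union with `{n}` implements the truncation at `n`, also when the set is empty). -/
noncomputable def tau (z₀ : ℝ) (n : ℕ) (ω : ℕ → Bool) : ℕ :=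
  sInf ({i | min (Zproc z₀ i ω) (1 - Zproc z₀ i ω) ≤ (2:ℝ) ^ (-(6 * (n:ℝ) / 5))} ∪ {n})

/-- The stopped value `Z_{τ_n}`. -/
noncomputable def Ztau (z₀ : ℝ) (n : ℕ) (ω : ℕ → Bool) : ℝ :=
  Zproc z₀ (tau z₀ n ω) ω

/-!
Up to `τ_n` the process moves by the polarization step; afterwards it is frozen, so
`Z_{τ_n ∧ i}` is again a chain driven by the coin flips, now with absorbing states
`min(z, 1 - z) ≤ ε := 2^(-6n/5)`. Hence `Z_{τ_n}` depends on the first `n` flips only, and its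
law is read off from sums over the `2^n` words.

Each word ends in one of three states: `Z_{τ_n} ≤ ε`, `Z_{τ_n} ≥ 1 - ε`, or never stopped.
The stopped process is a martingale with mean `z₀`, which bounds the words ending near `1`.
Words that are never stopped are counted with the potential
`G(z) = 20000 (1 + 3n) √(z(1-z)) + 1 + 3n / t(z)`, `t(z) = -log₂ min(z, 1 - z)`,
which satisfies `G(z²) + G(2z - z²) ≤ 1.74 G(z)` whenever `t(z) ≤ 6n/5`. Away from `{0, 1}` the
square-root term contracts by `√3/2`; near `{0, 1}` one child doubles `t` while the other
loses at most one bit, so the second term contracts because `3n / t ≥ 5/2`. Thus the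
never-stopped words form a fraction `O(n · 0.87^n)`, and `0.87 < 2^(-1/5)`.
-/

namespace BEC

def padFalse {n : ℕ} (w : Fin n → Bool) (k : ℕ) : Bool :=
  if h : k < n then w ⟨k, h⟩ else false

lemma padFalse_of_lt {n k : ℕ} (w : Fin n → Bool) (hk : k < n) : padFalse w k = w ⟨k, hk⟩ :=
  dif_pos hk

lemma padFalse_snoc_of_lt {n k : ℕ} (w : Fin n → Bool) (b : Bool) (hk : k < n) :
    padFalse (Fin.snoc w b : Fin (n + 1) → Bool) k = padFalse w k := by
  rw [padFalse_of_lt _ (hk.trans n.lt_succ_self), padFalse_of_lt _ hk]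
  exact Fin.snoc_castSucc (α := fun _ => Bool) (i := ⟨k, hk⟩) ..

lemma padFalse_snoc_self {n : ℕ} (w : Fin n → Bool) (b : Bool) :
    padFalse (Fin.snoc w b : Fin (n + 1) → Bool) n = b := by
  rw [padFalse_of_lt _ n.lt_succ_self]
  exact Fin.snoc_last (α := fun _ => Bool) ..

section Chain

variable {α : Type*} (f : Bool → α → α) (x₀ : α)

def chain : ℕ → (ℕ → Bool) → α
  | 0, _ => x₀
  | i + 1, ω => f (ω i) (chain i ω)

@[simp] lemma chain_zero (ω : ℕ → Bool) : chain f x₀ 0 ω = x₀ := rfl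

lemma chain_succ (i : ℕ) (ω : ℕ → Bool) : chain f x₀ (i + 1) ω = f (ω i) (chain f x₀ i ω) := rfl

variable {f x₀}

lemma chain_congr {i : ℕ} {ω ω' : ℕ → Bool} (h : ∀ k < i, ω k = ω' k) :
    chain f x₀ i ω = chain f x₀ i ω' := by
  induction i with
  | zero => rfl
  | succ i ih =>
    rw [chain_succ, chain_succ, h i i.lt_succ_self, ih fun k hk => h k (hk.trans i.lt_succ_self)]

lemma chain_mem {s : Set α} (hx₀ : x₀ ∈ s) (hf : ∀ b, Set.MapsTo (f b) s s) (i : ℕ)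
    (ω : ℕ → Bool) : chain f x₀ i ω ∈ s := by
  induction i with
  | zero => exact hx₀
  | succ i ih => exact hf _ ih

lemma chain_padFalse_prefix (n : ℕ) (ω : ℕ → Bool) :
    chain f x₀ n (padFalse fun i : Fin n => ω i) = chain f x₀ n ω :=
  chain_congr fun _ hk => padFalse_of_lt _ hk

lemma sum_chain_succ (V : α → ℝ) (n : ℕ) :
    ∑ w : Fin (n + 1) → Bool, V (chain f x₀ (n + 1) (padFalse w)) =
      ∑ w : Fin n → Bool, (V (f true (chain f x₀ n (padFalse w))) +
        V (f false (chain f x₀ n (padFalse w)))) := by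
  have hsnoc (w : Fin n → Bool) (b : Bool) :
      chain f x₀ (n + 1) (padFalse (Fin.snoc w b : Fin (n + 1) → Bool)) =
        f b (chain f x₀ n (padFalse w)) := by
    rw [chain_succ, padFalse_snoc_self, chain_congr fun k hk => padFalse_snoc_of_lt w b hk]
  rw [← (Fin.snocEquiv fun _ => Bool).sum_comp, Fintype.sum_prod_type, Fintype.sum_bool,
    ← Finset.sum_add_distrib]
  exact Finset.sum_congr rfl fun w _ => by rw [← hsnoc, ← hsnoc]; rfl

lemma sum_chain_eq {s : Set α} (hx₀ : x₀ ∈ s) (hf : ∀ b, Set.MapsTo (f b) s s)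
    {V : α → ℝ} {c : ℝ} (hV : ∀ x ∈ s, V (f true x) + V (f false x) = c * V x) (n : ℕ) :
    ∑ w : Fin n → Bool, V (chain f x₀ n (padFalse w)) = c ^ n * V x₀ := by
  induction n with
  | zero => simp
  | succ n ih =>
    simp only [sum_chain_succ, hV _ (chain_mem hx₀ hf _ _), ← Finset.mul_sum, ih]
    ring

lemma sum_chain_le {s : Set α} (hx₀ : x₀ ∈ s) (hf : ∀ b, Set.MapsTo (f b) s s)
    {V : α → ℝ} {c : ℝ} (hc : 0 ≤ c) (hV : ∀ x ∈ s, V (f true x) + V (f false x) ≤ c * V x)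
    (n : ℕ) : ∑ w : Fin n → Bool, V (chain f x₀ n (padFalse w)) ≤ c ^ n * V x₀ := by
  induction n with
  | zero => simp
  | succ n ih =>
    calc _ ≤ ∑ w : Fin n → Bool, c * V (chain f x₀ n (padFalse w)) := by
          rw [sum_chain_succ]
          exact Finset.sum_le_sum fun w _ => hV _ (chain_mem hx₀ hf _ _)
      _ ≤ c * (c ^ n * V x₀) := by rw [← Finset.mul_sum]; gcongr
      _ = c ^ (n + 1) * V x₀ := by ring

end Chain

lemma measure_prefix_eq {P : Measure (ℕ → Bool)} (hP : IsFairCoinMeasure P) {n : ℕ}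
    (w : Fin n → Bool) : P {ω | (fun i : Fin n => ω i) = w} = (1 / 2) ^ n := by
  obtain ⟨-, hind, hhalf⟩ := hP
  have hset : {ω : ℕ → Bool | (fun i : Fin n => ω i) = w} =
      ⋂ i ∈ (Finset.univ : Finset (Fin n)), (fun ω : ℕ → Bool => ω i) ⁻¹' {w i} := by
    ext ω; simp [funext_iff]
  rw [hset, (hind.precomp Fin.val_injective).measure_inter_preimage_eq_mul _
    fun _ _ => measurableSet_singleton _]
  simp [Set.preimage, hhalf]

open Classical in
lemma measure_setOf_prefix_eq_card_mul {P : Measure (ℕ → Bool)} (hP : IsFairCoinMeasure P)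
    {n : ℕ} (p : (Fin n → Bool) → Prop) :
    P {ω | p fun i : Fin n => ω i} = (Finset.univ.filter p).card * (1 / 2) ^ n := by
  calc P {ω | p fun i : Fin n => ω i}
      = P ((fun ω (i : Fin n) => ω i) ⁻¹' ↑(Finset.univ.filter p)) := by simp [Set.preimage]
    _ = ∑ w ∈ Finset.univ.filter p, P {ω | (fun i : Fin n => ω i) = w} :=
      (sum_measure_preimage_singleton _ fun _ _ =>
        measurableSet_eq_fun (by fun_prop) (by fun_prop)).symm
    _ = _ := by simp [measure_prefix_eq hP]

def step (b : Bool) (z : ℝ) : ℝ := if b then z ^ 2 else 2 * z - z ^ 2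

noncomputable def stoppedStep (ε : ℝ) (b : Bool) (z : ℝ) : ℝ :=
  if min z (1 - z) ≤ ε then z else step b z

lemma step_mapsTo (b : Bool) : Set.MapsTo (step b) (Set.Icc 0 1) (Set.Icc 0 1) := by
  rintro z ⟨h0, h1⟩
  cases b <;> simp only [step, Bool.false_eq_true, if_true, if_false] <;> constructor <;> nlinarith

lemma stoppedStep_mapsTo (ε : ℝ) (b : Bool) :
    Set.MapsTo (stoppedStep ε b) (Set.Icc 0 1) (Set.Icc 0 1) := fun z hz => by
  unfold stoppedStep; split_ifs
  exacts [hz, step_mapsTo b hz]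

lemma Zproc_eq_chain (z₀ : ℝ) : Zproc z₀ = chain step z₀ := by
  funext i ω
  induction i with
  | zero => rfl
  | succ i ih => rw [chain_succ, ← ih]; rfl

noncomputable def threshold (n : ℕ) : ℝ := 2 ^ (-(6 * (n : ℝ) / 5))

lemma tau_le (z₀ : ℝ) (n : ℕ) (ω : ℕ → Bool) : tau z₀ n ω ≤ n :=
  Nat.sInf_le (Set.mem_union_right _ rfl)

lemma min_Zproc_tau_le_threshold {z₀ : ℝ} {n : ℕ} {ω : ℕ → Bool} (h : tau z₀ n ω < n) :
    min (Zproc z₀ (tau z₀ n ω) ω) (1 - Zproc z₀ (tau z₀ n ω) ω) ≤ threshold n :=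
  (Nat.sInf_mem (Set.union_nonempty.mpr (Or.inr (Set.singleton_nonempty n)))).resolve_right
    h.ne

lemma threshold_lt_min_Zproc {z₀ : ℝ} {n i : ℕ} {ω : ℕ → Bool} (h : i < tau z₀ n ω) :
    threshold n < min (Zproc z₀ i ω) (1 - Zproc z₀ i ω) :=
  not_le.mp fun hi => Nat.notMem_of_lt_sInf h (Or.inl hi)

lemma chain_stoppedStep_eq_Zproc_min (z₀ : ℝ) {n i : ℕ} (ω : ℕ → Bool) (hi : i ≤ n) :
    chain (stoppedStep (threshold n)) z₀ i ω = Zproc z₀ (min (tau z₀ n ω) i) ω := by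
  induction i with
  | zero => rw [Nat.min_zero]; rfl
  | succ i ih =>
    rw [chain_succ, ih (by omega), stoppedStep]
    rcases le_or_gt (tau z₀ n ω) i with hτ | hτ
    · rw [Nat.min_eq_left hτ, Nat.min_eq_left (hτ.trans i.le_succ),
        if_pos (min_Zproc_tau_le_threshold (by omega))]
    · rw [Nat.min_eq_right hτ.le, Nat.min_eq_right hτ, if_neg (threshold_lt_min_Zproc hτ).not_ge,
        Zproc_eq_chain, chain_succ]

lemma Ztau_eq_chain (z₀ : ℝ) (n : ℕ) (ω : ℕ → Bool) :
    Ztau z₀ n ω = chain (stoppedStep (threshold n)) z₀ n ω := by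
  rw [chain_stoppedStep_eq_Zproc_min z₀ ω le_rfl, Nat.min_eq_left (tau_le z₀ n ω), Ztau]

noncomputable def depth (z : ℝ) : ℝ := -Real.logb 2 (min z (1 - z))

lemma depth_one_sub (z : ℝ) : depth (1 - z) = depth z := by
  rw [depth, depth, sub_sub_cancel, min_comm]

lemma depth_of_le_half {z : ℝ} (hz : z ≤ 1 / 2) : depth z = -Real.logb 2 z := by
  rw [depth, min_eq_left (by linarith)]

lemma depth_nonneg {z : ℝ} (hz : z ∈ Set.Icc (0 : ℝ) 1) : 0 ≤ depth z := by
  have := Real.logb_nonpos one_lt_two (le_min hz.1 (sub_nonneg.mpr hz.2))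
    ((min_le_left _ _).trans hz.2)
  rw [depth]; linarith

lemma one_le_depth {z : ℝ} (h0 : 0 < z) (h1 : z < 1) : 1 ≤ depth z := by
  have hmin : min z (1 - z) ≤ 2 ^ (-1 : ℝ) := by
    rw [Real.rpow_neg_one]; rcases le_total z (1 - z) with h | h <;> simp [h] <;> linarith
  have := (Real.logb_le_iff_le_rpow one_lt_two (lt_min h0 (by linarith))).mpr hmin
  rw [depth]; linarith

lemma div_depth_le {A z : ℝ} (hA : 0 ≤ A) (hz : z ∈ Set.Icc (0 : ℝ) 1) : A / depth z ≤ A := by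
  by_cases h : 0 < z ∧ z < 1
  · exact div_le_self hA (one_le_depth h.1 h.2)
  · obtain rfl | rfl : z = 0 ∨ z = 1 := by
      rcases hz with ⟨h0, h1⟩
      by_contra! h'
      exact h ⟨lt_of_le_of_ne h0 h'.1.symm, lt_of_le_of_ne h1 h'.2⟩
    all_goals simpa [depth] using hA

lemma eleven_le_depth {z : ℝ} (h0 : 0 < z) (hz : z ≤ 1 / 2048) : 11 ≤ depth z := by
  have : Real.logb 2 z ≤ -11 := by
    rw [Real.logb_le_iff_le_rpow one_lt_two h0]; norm_num; linarith
  rw [depth_of_le_half (by linarith)]; linarith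

lemma depth_sq {z : ℝ} (h0 : 0 < z) (hz : z ≤ 1 / 2) : depth (z ^ 2) = 2 * depth z := by
  rw [depth_of_le_half (by nlinarith), depth_of_le_half hz, Real.logb_pow]; ring

lemma depth_sub_one_le {z : ℝ} (h0 : 0 < z) (hz : z ≤ 1 / 2) :
    depth z - 1 ≤ depth (2 * z - z ^ 2) := by
  have hmin : min (2 * z - z ^ 2) (1 - (2 * z - z ^ 2)) ≤ 2 * z :=
    (min_le_left _ _).trans (by nlinarith)
  have := (Real.logb_le_logb one_lt_two (lt_min (by nlinarith) (by nlinarith)) (by linarith)).mpr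
    hmin
  rw [Real.logb_mul two_ne_zero h0.ne', Real.logb_self_eq_one one_lt_two] at this
  rw [depth_of_le_half hz, depth]; linarith

lemma sqrt_add_sqrt_le {z : ℝ} (h0 : 0 ≤ z) (h1 : z ≤ 1) :
    √(z * (1 + z)) + √((1 - z) * (2 - z)) ≤ √3 := by
  have hp := Real.sq_sqrt (show 0 ≤ z * (1 + z) by positivity)
  have hq := Real.sq_sqrt (show 0 ≤ (1 - z) * (2 - z) by nlinarith)
  set p := √(z * (1 + z))
  set q := √((1 - z) * (2 - z))
  have hp0 : 0 ≤ p := Real.sqrt_nonneg _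
  have hq0 : 0 ≤ q := Real.sqrt_nonneg _
  have hpq : (p * q) ^ 2 = z * (1 - z) * (2 + z * (1 - z)) := by rw [mul_pow, hp, hq]; ring
  have h2pq : 2 * (p * q) ≤ 1 + 2 * (z * (1 - z)) := by
    refine le_of_pow_le_pow_left₀ two_ne_zero (by nlinarith) ?_
    nlinarith [sq_nonneg (2 * z - 1)]
  rw [Real.le_sqrt (by positivity) (by norm_num)]
  nlinarith

lemma sqrt_step_le {z : ℝ} (h0 : 0 ≤ z) (h1 : z ≤ 1) :
    √(z ^ 2 * (1 - z ^ 2)) + √((2 * z - z ^ 2) * (1 - (2 * z - z ^ 2))) ≤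
      √3 * √(z * (1 - z)) := by
  have hu : 0 ≤ z * (1 - z) := mul_nonneg h0 (sub_nonneg.mpr h1)
  rw [show z ^ 2 * (1 - z ^ 2) = z * (1 - z) * (z * (1 + z)) by ring,
    show (2 * z - z ^ 2) * (1 - (2 * z - z ^ 2)) = z * (1 - z) * ((1 - z) * (2 - z)) by ring,
    Real.sqrt_mul hu, Real.sqrt_mul hu, ← mul_add, mul_comm (√3)]
  exact mul_le_mul_of_nonneg_left (sqrt_add_sqrt_le h0 h1) (Real.sqrt_nonneg _)

lemma sqrt_three_lt : √3 < 17321 / 10000 := by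
  rw [Real.sqrt_lt' (by norm_num)]; norm_num

noncomputable def potential (A z : ℝ) : ℝ :=
  20000 * (1 + A) * √(z * (1 - z)) + (1 + A / depth z)

lemma potential_one_sub (A z : ℝ) : potential A (1 - z) = potential A z := by
  rw [potential, potential, depth_one_sub, sub_sub_cancel, mul_comm (1 - z)]

lemma one_le_potential {A z : ℝ} (hA : 0 ≤ A) (hz : z ∈ Set.Icc (0 : ℝ) 1) :
    1 ≤ potential A z := by
  have := div_nonneg hA (depth_nonneg hz)
  have : 0 ≤ 20000 * (1 + A) * √(z * (1 - z)) := by positivity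
  unfold potential; linarith

lemma potential_le {A z : ℝ} (hA : 0 ≤ A) (hz : z ∈ Set.Icc (0 : ℝ) 1) :
    potential A z ≤ 10001 * (1 + A) := by
  have hsqrt : √(z * (1 - z)) ≤ 1 / 2 :=
    Real.sqrt_le_iff.mpr ⟨by norm_num, by nlinarith [sq_nonneg (2 * z - 1)]⟩
  have := mul_le_mul_of_nonneg_left hsqrt (by positivity : (0 : ℝ) ≤ 20000 * (1 + A))
  have := div_depth_le hA hz
  unfold potential; linarith

lemma potential_step_near_boundary {A z : ℝ} (hA : 0 ≤ A) (h0 : 0 < z) (hz : z ≤ 1 / 2048)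
    (hdepth : depth z ≤ 2 / 5 * A) :
    potential A (z ^ 2) + potential A (2 * z - z ^ 2) ≤ 87 / 50 * potential A z := by
  have ht : 11 ≤ depth z := eleven_le_depth h0 hz
  have ht' : depth z - 1 ≤ depth (2 * z - z ^ 2) := depth_sub_one_le h0 (by linarith)
  -- Near the boundary one child doubles the depth and the other loses at most one bit.
  have hdiv : (1 + A / (2 * depth z)) + (1 + A / depth (2 * z - z ^ 2)) ≤
      87 / 50 * (1 + A / depth z) := by
    have h1 : A / depth (2 * z - z ^ 2) ≤ A / (depth z - 1) :=
      div_le_div_of_nonneg_left hA (by linarith) ht'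
    have h2 : A / (depth z - 1) ≤ 11 / 10 * (A / depth z) := by
      rw [div_le_iff₀ (by linarith), mul_comm, ← mul_assoc, mul_div_assoc',
        le_div_iff₀ (by linarith)]
      nlinarith
    have h3 : A / (2 * depth z) = A / depth z / 2 := by ring
    have h4 : 5 / 2 ≤ A / depth z := by rw [le_div_iff₀ (by linarith)]; linarith
    linarith
  have hsqrt := mul_le_mul_of_nonneg_left ((sqrt_step_le h0.le (by linarith)).trans
    (mul_le_mul_of_nonneg_right
      (sqrt_three_lt.le.trans (by norm_num : (17321 / 10000 : ℝ) ≤ 87 / 50)) (Real.sqrt_nonneg _)))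
    (by positivity : (0 : ℝ) ≤ 20000 * (1 + A))
  unfold potential
  rw [depth_sq h0 (by linarith)]
  nlinarith

lemma potential_step_away_from_boundary {A z : ℝ} (hA : 0 ≤ A) (hz : 1 / 2048 < z)
    (hz' : z ≤ 1 / 2) :
    potential A (z ^ 2) + potential A (2 * z - z ^ 2) ≤ 87 / 50 * potential A z := by
  have hIcc : z ∈ Set.Icc (0 : ℝ) 1 := ⟨by linarith, by linarith⟩
  -- The square-root term alone contracts by `√3 < 1.7321`; the slack absorbs the depth terms.
  have hh : 1 / 64 ≤ √(z * (1 - z)) := by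
    rw [Real.le_sqrt (by norm_num) (by nlinarith)]; nlinarith
  have hsqrt := mul_le_mul_of_nonneg_left (sqrt_step_le hIcc.1 hIcc.2)
    (by positivity : (0 : ℝ) ≤ 20000 * (1 + A))
  have h3 := mul_le_mul_of_nonneg_left sqrt_three_lt.le
    (by positivity : (0 : ℝ) ≤ 20000 * (1 + A) * √(z * (1 - z)))
  have hd1 := div_depth_le hA (step_mapsTo true hIcc)
  have hd2 := div_depth_le hA (step_mapsTo false hIcc)
  have hd := div_nonneg hA (depth_nonneg hIcc)
  have hB := mul_le_mul_of_nonneg_left hh (by positivity : (0 : ℝ) ≤ 1 + A)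
  simp only [step, if_true, Bool.false_eq_true, if_false] at hd1 hd2
  unfold potential
  nlinarith

lemma potential_step {A z : ℝ} (hA : 0 ≤ A) (h0 : 0 < z) (h1 : z < 1)
    (hdepth : depth z ≤ 2 / 5 * A) :
    potential A (z ^ 2) + potential A (2 * z - z ^ 2) ≤ 87 / 50 * potential A z := by
  have of_le_half {z : ℝ} (h0 : 0 < z) (hz : z ≤ 1 / 2) (hdepth : depth z ≤ 2 / 5 * A) :=
    (le_or_gt z (1 / 2048)).elim (potential_step_near_boundary hA h0 · hdepth)
      (potential_step_away_from_boundary hA · hz)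
  rcases le_or_gt z (1 / 2) with hz | hz
  · exact of_le_half h0 hz hdepth
  · -- `z ↦ 1 - z` swaps the two children.
    have := of_le_half (z := 1 - z) (by linarith) (by linarith) (by rwa [depth_one_sub])
    rwa [← potential_one_sub A (z ^ 2), ← potential_one_sub A (2 * z - z ^ 2),
      ← potential_one_sub A z, add_comm, show 1 - z ^ 2 = 2 * (1 - z) - (1 - z) ^ 2 by ring,
      show 1 - (2 * z - z ^ 2) = (1 - z) ^ 2 by ring]

noncomputable def activePotential (ε A z : ℝ) : ℝ :=
  if min z (1 - z) ≤ ε then 0 else potential A z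

lemma activePotential_le_potential {ε A z : ℝ} (hA : 0 ≤ A) (hz : z ∈ Set.Icc (0 : ℝ) 1) :
    activePotential ε A z ≤ potential A z := by
  unfold activePotential; split_ifs
  exacts [zero_le_one.trans (one_le_potential hA hz), le_rfl]

lemma activePotential_stoppedStep {ε A z : ℝ} (hA : 0 ≤ A) (hε : 0 < ε)
    (hεA : -Real.logb 2 ε ≤ 2 / 5 * A) (hz : z ∈ Set.Icc (0 : ℝ) 1) :
    activePotential ε A (stoppedStep ε true z) + activePotential ε A (stoppedStep ε false z) ≤
      87 / 50 * activePotential ε A z := by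
  by_cases h : min z (1 - z) ≤ ε
  · simp [stoppedStep, activePotential, h]
  · rw [not_le] at h
    have h0 : 0 < z := hε.trans (h.trans_le (min_le_left _ _))
    have h1 : z < 1 := sub_pos.mp (hε.trans (h.trans_le (min_le_right _ _)))
    have hdepth : depth z ≤ 2 / 5 * A := by
      have := Real.logb_lt_logb one_lt_two hε h
      rw [depth]; linarith
    simp only [stoppedStep, activePotential, if_neg h.not_ge]
    calc _ ≤ potential A (step true z) + potential A (step false z) :=
          add_le_add (activePotential_le_potential hA (step_mapsTo true hz))
            (activePotential_le_potential hA (step_mapsTo false hz))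
      _ ≤ 87 / 50 * potential A z := by
          simpa only [step, if_true, Bool.false_eq_true, if_false] using
            potential_step hA h0 h1 hdepth

lemma one_sub_le_ite_add_add_activePotential {ε A z : ℝ} (hε : 0 ≤ ε) (hA : 0 ≤ A) (hz : 0 ≤ z) :
    1 - ε ≤ (if z ≤ ε then 1 else 0) + z + activePotential ε A z := by
  by_cases hs : min z (1 - z) ≤ ε
  · have hzero : activePotential ε A z = 0 := if_pos hs
    rcases min_le_iff.mp hs with h | h
    · simp [h, hzero]; linarith
    · split_ifs <;> linarith
  · rw [not_le] at hs
    have h0 : 0 < z := hε.trans_lt (hs.trans_le (min_le_left _ _))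
    have h1 : z < 1 := sub_pos.mp (hε.trans_lt (hs.trans_le (min_le_right _ _)))
    have := one_le_potential hA ⟨h0.le, h1.le⟩
    rw [activePotential, if_neg hs.not_ge]
    split_ifs <;> linarith

lemma two_rpow_neg_div_five_eq_pow (n : ℕ) : (2 : ℝ) ^ (-(n : ℝ) / 5) = (2 ^ (-1 / 5 : ℝ)) ^ n := by
  rw [← Real.rpow_natCast, ← Real.rpow_mul zero_le_two]; ring_nf

lemma threshold_eq_pow (n : ℕ) : threshold n = (2 ^ (-6 / 5 : ℝ)) ^ n := by
  rw [threshold, ← Real.rpow_natCast, ← Real.rpow_mul zero_le_two]; ring_nf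

lemma neg_logb_threshold (n : ℕ) : -Real.logb 2 (threshold n) = 2 / 5 * (3 * n) := by
  rw [threshold, Real.logb_rpow zero_lt_two (by norm_num)]; ring

lemma eventually_threshold_add_le :
    ∀ᶠ n : ℕ in Filter.atTop,
      threshold n + (87 / 100) ^ n * (10001 * (1 + 3 * n)) ≤ (2 : ℝ) ^ (-(n : ℝ) / 5) := by
  set r : ℝ := 2 ^ (-1 / 5 : ℝ)
  have hr5 : r ^ 5 = 1 / 2 := by
    rw [← Real.rpow_natCast, ← Real.rpow_mul zero_le_two]; norm_num
  have h87 : (87 / 100 : ℝ) < r :=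
    lt_of_pow_lt_pow_left₀ 5 (by positivity) (by rw [hr5]; norm_num)
  have h65 : (2 : ℝ) ^ (-6 / 5 : ℝ) < r := Real.rpow_lt_rpow_of_exponent_lt one_lt_two (by norm_num)
  have hlittle := (isLittleO_pow_pow_of_lt_left (by positivity) h65).add
    (((isLittleO_pow_pow_of_lt_left (by norm_num) h87).const_mul_left 10001).add
      ((isLittleO_pow_const_mul_const_pow_const_pow_of_norm_lt 1 (r₁ := (87 / 100 : ℝ))
        (by rwa [Real.norm_of_nonneg (by norm_num)])).const_mul_left 30003))
  filter_upwards [hlittle.def one_pos] with n hn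
  rw [one_mul, Real.norm_of_nonneg (pow_nonneg (by positivity) n)] at hn
  rw [threshold_eq_pow, two_rpow_neg_div_five_eq_pow]
  refine le_trans (le_of_eq ?_) ((Real.le_norm_self _).trans hn)
  ring

lemma one_sub_sub_le_measure_Ztau_le {z₀ : ℝ} (hz : z₀ ∈ Set.Icc (0 : ℝ) 1)
    {P : Measure (ℕ → Bool)} (hP : IsFairCoinMeasure P) (n : ℕ) :
    1 - z₀ - threshold n - (87 / 100) ^ n * (10001 * (1 + 3 * n)) ≤
      (P {ω | Ztau z₀ n ω ≤ threshold n}).toReal := by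
  classical
  have hε : 0 < threshold n := Real.rpow_pos_of_pos two_pos _
  have hA : (0 : ℝ) ≤ 3 * n := by positivity
  set S : (Fin n → Bool) → ℝ := fun w => chain (stoppedStep (threshold n)) z₀ n (padFalse w)
  have hS (w : Fin n → Bool) : S w ∈ Set.Icc (0 : ℝ) 1 := chain_mem hz (stoppedStep_mapsTo _) _ _
  have hprob : (P {ω | Ztau z₀ n ω ≤ threshold n}).toReal =
      (Finset.univ.filter fun w => S w ≤ threshold n).card * (1 / 2) ^ n := by
    have : {ω | Ztau z₀ n ω ≤ threshold n} = {ω | S (fun i : Fin n => ω i) ≤ threshold n} := by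
      ext ω; rw [Set.mem_ofPred_eq, Ztau_eq_chain, ← chain_padFalse_prefix]; rfl
    rw [this, measure_setOf_prefix_eq_card_mul hP (fun w => S w ≤ threshold n)]
    simp
  have hmartingale : ∑ w, S w = 2 ^ n * z₀ := by
    simpa using sum_chain_eq (V := id) (c := 2) hz (stoppedStep_mapsTo (threshold n))
      (fun z _ => by
        simp only [id, stoppedStep, step, if_true, Bool.false_eq_true, if_false]
        split_ifs <;> ring) n
  have hpotential : ∑ w, activePotential (threshold n) (3 * n) (S w) ≤
      (87 / 50) ^ n * (10001 * (1 + 3 * n)) :=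
    (sum_chain_le hz (stoppedStep_mapsTo _) (by norm_num)
      (fun z hz => activePotential_stoppedStep hA hε (neg_logb_threshold n).le hz) n).trans
      (by gcongr; exact (activePotential_le_potential hA hz).trans (potential_le hA hz))
  have hsum : ∑ _w : Fin n → Bool, (1 - threshold n) ≤ ∑ w, ((if S w ≤ threshold n then 1 else 0) +
      S w + activePotential (threshold n) (3 * n) (S w)) :=
    Finset.sum_le_sum fun w _ => one_sub_le_ite_add_add_activePotential hε.le hA (hS w).1
  simp only [Finset.sum_add_distrib, Finset.sum_boole, Finset.sum_const, Finset.card_univ,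
    Fintype.card_fun, Fintype.card_bool, Fintype.card_fin, nsmul_eq_mul, hmartingale] at hsum
  have hhalf : (2 : ℝ) ^ n * (1 / 2) ^ n = 1 := by rw [← mul_pow]; norm_num
  have h87 : (87 / 50 : ℝ) ^ n * (1 / 2) ^ n = (87 / 100) ^ n := by rw [← mul_pow]; norm_num
  push_cast at hsum
  have hscaled := mul_le_mul_of_nonneg_right (hsum.trans (add_le_add_right hpotential _))
    (pow_nonneg (by norm_num : (0 : ℝ) ≤ 1 / 2) n)
  rw [hprob]
  linear_combination hscaled - (1 - threshold n - z₀) * hhalf + (10001 * (1 + 3 * n)) * h87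

end BEC

/-- For every z₀ ∈ [0,1] there is n₀ such that for all n ≥ n₀,
ℙ{ Z_{τ_n} ≤ 2^(−6n/5) } ≥ (1 − z₀) − 2^(−n/5). -/
theorem stmt10 (z₀ : ℝ) (hz : z₀ ∈ Set.Icc (0:ℝ) 1)
    (P : Measure (ℕ → Bool)) (hP : IsFairCoinMeasure P) :
    ∃ n₀ : ℕ, ∀ n : ℕ, n₀ ≤ n →
      (P {ω | Ztau z₀ n ω ≤ (2:ℝ) ^ (-(6 * (n:ℝ) / 5))}).toReal
        ≥ (1 - z₀) - (2:ℝ) ^ (-(n:ℝ) / 5) := by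
  obtain ⟨n₀, hn₀⟩ := Filter.eventually_atTop.mp BEC.eventually_threshold_add_le
  refine ⟨n₀, fun n hn => ?_⟩
  have := BEC.one_sub_sub_le_measure_Ztau_le hz hP n
  have := hn₀ n hn
  unfold BEC.threshold at *
  linarith
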